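/- For every real Ω > 1, one has 1 − (1/Ω)·(Γ(Ω + 1/2)/Γ(Ω))² < (4 − π)/4. Consequently, if X has the Rayleigh density with power parameter σ_I² = σ_s² φ and Y has the Nakagami density with shape Ω and spread φ (with φ > 0, σ_s > 0), then Var[X] > σ_s² Var[Y], i.e., for Ω > 1 the variance of the interference magnitude under f-FAMA strictly exceeds that under s-FAMA. -/

import Mathlib

open MeasureTheory ProbabilityTheory Real Set

/-- The Nakagami density with shape `m` and spread `Ω`. -/
noncomputable def nakagamiPDF (m Ω τ : ℝ) : ℝ :=
  if 0 < τ then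
    2 * m ^ m * τ ^ (2 * m - 1) * Real.exp (-(m * τ ^ 2) / Ω) / (Real.Gamma m * Ω ^ m)
  else 0

/-- The Rayleigh density with power parameter `c`. -/
noncomputable def rayleighPDF (c τ : ℝ) : ℝ :=
  if 0 < τ then 2 * τ / c * Real.exp (-τ ^ 2 / c) else 0

/-!
Write `g x = (1/x) (Γ(x + 1/2) / Γ x)² = Γ(x + 1/2)² / (Γ x · Γ(x + 1))`, so that the inequality
reads `π/4 = g 1 < g Ω`.
Log-convexity of `Γ` squeezes `x / (x + 1/2) ≤ g x ≤ 1`, hence `g x → 1`, and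
`g (x + 1) = (1 + 1 / (4x(x + 1))) · g x` with a factor decreasing in `x`. Iterating the
recursion `n` times and letting `n → ∞` shows that `g` is strictly increasing.

A Nakagami variable of shape `m` and spread `Ω` has `E[Y^k] = Γ(m + k/2)/Γ(m) · (Ω/m)^(k/2)`,
so its variance is `Ω (1 - g m)`; the Rayleigh density with power `c` is the Nakagami one with
`m = 1`, `Ω = c`, of variance `c (1 - π/4)`.
-/

open Filter Topology

noncomputable def gammaRatio (x : ℝ) : ℝ := (1 / x) * (Gamma (x + 1 / 2) / Gamma x) ^ 2

section GammaRatio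

variable {x y : ℝ}

lemma gammaRatio_eq (hx : 0 < x) :
    gammaRatio x = Gamma (x + 1 / 2) ^ 2 / (Gamma x * Gamma (x + 1)) := by
  have : Gamma x ≠ 0 := (Gamma_pos_of_pos hx).ne'
  rw [gammaRatio, Gamma_add_one hx.ne']
  field_simp

lemma gammaRatio_pos (hx : 0 < x) : 0 < gammaRatio x := by
  rw [gammaRatio_eq hx]
  positivity

lemma gammaRatio_one : gammaRatio 1 = π / 4 := by
  rw [gammaRatio, show (1 : ℝ) + 1 / 2 = 1 / 2 + 1 by norm_num, Gamma_add_one (by norm_num),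
    Gamma_one_half_eq, Gamma_one]
  linear_combination (1 / 4 : ℝ) * sq_sqrt pi_pos.le

lemma gammaRatio_add_one (hx : 0 < x) :
    gammaRatio (x + 1) = (x + 1 / 2) ^ 2 / (x * (x + 1)) * gammaRatio x := by
  have : Gamma x ≠ 0 := (Gamma_pos_of_pos hx).ne'
  rw [gammaRatio, gammaRatio, add_right_comm, Gamma_add_one (by positivity), Gamma_add_one hx.ne']
  field_simp

lemma sq_Gamma_midpoint_le {s t : ℝ} (hs : 0 < s) (ht : 0 < t) :
    Gamma ((s + t) / 2) ^ 2 ≤ Gamma s * Gamma t := by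
  have h := Gamma_mul_add_mul_le_rpow_Gamma_mul_rpow_Gamma hs ht (a := 1 / 2) (b := 1 / 2)
    (by norm_num) (by norm_num) (by norm_num)
  rw [← mul_rpow (Gamma_pos_of_pos hs).le (Gamma_pos_of_pos ht).le, ← sqrt_eq_rpow,
    show 1 / 2 * s + 1 / 2 * t = (s + t) / 2 by ring] at h
  exact (le_sqrt (Gamma_pos_of_pos (by positivity)).le (by positivity)).mp h

lemma gammaRatio_le_one (hx : 0 < x) : gammaRatio x ≤ 1 := by
  have h := sq_Gamma_midpoint_le hx (by positivity : 0 < x + 1)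
  rw [show (x + (x + 1)) / 2 = x + 1 / 2 by ring] at h
  rw [gammaRatio_eq hx, div_le_one (by positivity)]
  exact h

lemma div_add_half_le_gammaRatio (hx : 0 < x) : x / (x + 1 / 2) ≤ gammaRatio x := by
  have h := sq_Gamma_midpoint_le (by positivity : 0 < x + 1 / 2) (by positivity : 0 < x + 3 / 2)
  rw [show (x + 1 / 2 + (x + 3 / 2)) / 2 = x + 1 by ring, show x + 3 / 2 = x + 1 / 2 + 1 by ring,
    Gamma_add_one (s := x + 1 / 2) (by positivity), Gamma_add_one hx.ne'] at h
  rw [gammaRatio_eq hx, Gamma_add_one hx.ne', div_le_div_iff₀ (by positivity) (by positivity)]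
  nlinarith

lemma tendsto_gammaRatio_atTop : Tendsto gammaRatio atTop (𝓝 1) := by
  have hlow : Tendsto (fun x : ℝ => x / (x + 1 / 2)) atTop (𝓝 1) := by
    have h := (tendsto_const_nhds (x := (1 : ℝ))).sub <|
      (tendsto_const_nhds (x := (1 / 2 : ℝ))).div_atTop
        (tendsto_atTop_add_const_right _ (1 / 2) tendsto_id)
    rw [sub_zero] at h
    refine h.congr' ?_
    filter_upwards [eventually_gt_atTop 0] with x hx
    dsimp only [id]
    field_simp
    ring
  refine tendsto_of_tendsto_of_tendsto_of_le_of_le' hlow tendsto_const_nhds ?_ ?_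
  · filter_upwards [eventually_gt_atTop 0] with x hx using div_add_half_le_gammaRatio hx
  · filter_upwards [eventually_gt_atTop 0] with x hx using gammaRatio_le_one hx

lemma strictAntiOn_add_half_sq_div :
    StrictAntiOn (fun t : ℝ => (t + 1 / 2) ^ 2 / (t * (t + 1))) (Ioi 0) := by
  intro a (ha : 0 < a) b (hb : 0 < b) hab
  rw [div_lt_div_iff₀ (by positivity) (by positivity)]
  nlinarith [mul_pos ha hb]

lemma gammaRatio_mul_add_nat_le (hx : 0 < x) (hxy : x ≤ y) (n : ℕ) :
    gammaRatio x * gammaRatio (y + n) ≤ gammaRatio y * gammaRatio (x + n) := by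
  induction n with
  | zero => simp [mul_comm]
  | succ n ih =>
    have hxn : 0 < x + n := by positivity
    have hyn : 0 < y + n := by linarith
    push_cast
    rw [← add_assoc, ← add_assoc, gammaRatio_add_one hxn, gammaRatio_add_one hyn]
    have hr := strictAntiOn_add_half_sq_div.antitoneOn hxn hyn (by linarith)
    have := mul_le_mul hr ih (mul_pos (gammaRatio_pos hx) (gammaRatio_pos hyn)).le
      (by positivity)
    linear_combination this

lemma monotoneOn_gammaRatio : MonotoneOn gammaRatio (Ioi 0) := by
  intro x (hx : 0 < x) y _ hxy
  have hlim (z : ℝ) : Tendsto (fun n : ℕ => gammaRatio (z + n)) atTop (𝓝 1) :=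
    tendsto_gammaRatio_atTop.comp (tendsto_atTop_add_const_left _ z tendsto_natCast_atTop_atTop)
  simpa using le_of_tendsto_of_tendsto' ((hlim y).const_mul (gammaRatio x))
    ((hlim x).const_mul (gammaRatio y)) (gammaRatio_mul_add_nat_le hx hxy)

lemma strictMonoOn_gammaRatio : StrictMonoOn gammaRatio (Ioi 0) := by
  intro x (hx : 0 < x) y (hy : 0 < y) hxy
  have h := monotoneOn_gammaRatio (show 0 < x + 1 by linarith) (show 0 < y + 1 by linarith)
    (by linarith)
  rw [gammaRatio_add_one hx, gammaRatio_add_one hy] at h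
  have hr := mul_lt_mul_of_pos_right (strictAntiOn_add_half_sq_div hx hy hxy) (gammaRatio_pos hx)
  exact lt_of_mul_lt_mul_left (hr.trans_le h) (by positivity)

end GammaRatio

section Nakagami

variable {m Ω : ℝ}

lemma nakagamiPDF_nonneg (hm : 0 < m) (hΩ : 0 < Ω) (τ : ℝ) : 0 ≤ nakagamiPDF m Ω τ := by
  unfold nakagamiPDF
  split_ifs <;> positivity

lemma measurable_nakagamiPDF : Measurable (nakagamiPDF m Ω) :=
  Measurable.ite measurableSet_Ioi (by fun_prop) measurable_const

lemma nakagamiPDF_one (c : ℝ) : nakagamiPDF 1 c = rayleighPDF c := by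
  ext τ
  norm_num [nakagamiPDF, rayleighPDF, div_mul_eq_mul_div]

lemma integral_nakagamiPDF_mul_pow (hm : 0 < m) (hΩ : 0 < Ω) (k : ℕ) :
    ∫ τ, nakagamiPDF m Ω τ * τ ^ k = Gamma (m + k / 2) / Gamma m * (Ω / m) ^ ((k : ℝ) / 2) := by
  rw [← setIntegral_eq_integral_of_forall_compl_eq_zero (s := Ioi 0) fun τ hτ => by
    rw [nakagamiPDF, if_neg (show ¬0 < τ from hτ), zero_mul]]
  have hintegrand : ∀ τ ∈ Ioi (0 : ℝ), nakagamiPDF m Ω τ * τ ^ k =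
      2 * m ^ m / (Gamma m * Ω ^ m) * (τ ^ (2 * m - 1 + k) * exp (-(m / Ω) * τ ^ (2 : ℝ))) := by
    intro τ (hτ : 0 < τ)
    rw [nakagamiPDF, if_pos hτ, rpow_add_natCast hτ.ne', rpow_two]
    ring_nf
  rw [setIntegral_congr_fun measurableSet_Ioi hintegrand, integral_const_mul,
    integral_rpow_mul_exp_neg_mul_rpow two_pos (by linarith) (by positivity),
    show (2 * m - 1 + k + 1) / 2 = m + k / 2 by ring,
    show -(2 * m - 1 + k + 1) / 2 = -(m + k / 2) by ring, rpow_neg (by positivity),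
    ← inv_rpow (by positivity), inv_div, rpow_add (by positivity), div_rpow hΩ.le hm.le m]
  have := (Gamma_pos_of_pos hm).ne'
  field_simp

lemma integral_comp_eq_of_map_eq_withDensity {Ωs : Type*} [MeasurableSpace Ωs] {P : Measure Ωs}
    {X : Ωs → ℝ} (hX : Measurable X) {p : ℝ → ℝ} (hp : Measurable p) (hp0 : ∀ τ, 0 ≤ p τ)
    (hmap : Measure.map X P = volume.withDensity fun τ => ENNReal.ofReal (p τ))
    {g : ℝ → ℝ} (hg : Measurable g) :
    ∫ ω, g (X ω) ∂P = ∫ τ, p τ * g τ := by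
  rw [← integral_map hX.aemeasurable hg.aestronglyMeasurable, hmap,
    integral_withDensity_eq_integral_toReal_smul hp.ennreal_ofReal
      (ae_of_all _ fun _ => ENNReal.ofReal_lt_top)]
  simp only [ENNReal.toReal_ofReal (hp0 _), smul_eq_mul]

lemma integral_sq_sub_sq_integral_of_map_eq_nakagami {Ωs : Type*} [MeasurableSpace Ωs]
    {P : Measure Ωs} {Y : Ωs → ℝ} (hY : Measurable Y) (hm : 0 < m) (hΩ : 0 < Ω)
    (hmap : Measure.map Y P = volume.withDensity fun τ => ENNReal.ofReal (nakagamiPDF m Ω τ)) :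
    (∫ ω, Y ω ^ 2 ∂P) - (∫ ω, Y ω ∂P) ^ 2 = Ω * (1 - gammaRatio m) := by
  have hmoment (k : ℕ) :
      ∫ ω, Y ω ^ k ∂P = Gamma (m + k / 2) / Gamma m * (Ω / m) ^ ((k : ℝ) / 2) :=
    (integral_comp_eq_of_map_eq_withDensity hY measurable_nakagamiPDF
      (nakagamiPDF_nonneg hm hΩ) hmap (measurable_id.pow_const k)).trans
      (integral_nakagamiPDF_mul_pow hm hΩ k)
  have hmean := hmoment 1
  simp only [pow_one] at hmean
  rw [hmean, hmoment 2]
  norm_num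
  rw [Gamma_add_one hm.ne', mul_pow, ← sqrt_eq_rpow, sq_sqrt (by positivity), gammaRatio]
  have := (Gamma_pos_of_pos hm).ne'
  field_simp

end Nakagami

theorem stmt_18_general
    {Ωs : Type*} [MeasurableSpace Ωs] (P : Measure Ωs)
    (Ω φ σs : ℝ) (hΩ : 1 < Ω) (hφ : 0 < φ) (hσs : 0 < σs)
    (X Y : Ωs → ℝ) (hXmeas : Measurable X) (hYmeas : Measurable Y)
    (hX : Measure.map X P =
      volume.withDensity (fun τ => ENNReal.ofReal (rayleighPDF (σs ^ 2 * φ) τ)))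
    (hY : Measure.map Y P =
      volume.withDensity (fun τ => ENNReal.ofReal (nakagamiPDF Ω φ τ))) :
    (1 - (1 / Ω) * (Real.Gamma (Ω + 1 / 2) / Real.Gamma Ω) ^ 2 < (4 - π) / 4) ∧
    (σs ^ 2 * ((∫ ω, (Y ω) ^ 2 ∂P) - (∫ ω, Y ω ∂P) ^ 2) <
      (∫ ω, (X ω) ^ 2 ∂P) - (∫ ω, X ω ∂P) ^ 2) := by
  have hratio : π / 4 < gammaRatio Ω :=
    gammaRatio_one ▸ strictMonoOn_gammaRatio (mem_Ioi.2 one_pos) (mem_Ioi.2 (by linarith)) hΩ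
  have hvarY := integral_sq_sub_sq_integral_of_map_eq_nakagami hYmeas (by linarith) hφ hY
  have hvarX := integral_sq_sub_sq_integral_of_map_eq_nakagami (Ω := σs ^ 2 * φ) hXmeas one_pos
    (by positivity) (by rwa [nakagamiPDF_one])
  rw [gammaRatio_one] at hvarX
  refine ⟨by unfold gammaRatio at hratio; linarith, ?_⟩
  rw [hvarX, hvarY]
  calc σs ^ 2 * (φ * (1 - gammaRatio Ω)) = σs ^ 2 * φ * (1 - gammaRatio Ω) := by ring
    _ < σs ^ 2 * φ * (1 - π / 4) := by gcongr

/-- for every real `Ω > 1`, `1 − (1/Ω)(Γ(Ω+1/2)/Γ(Ω))² < (4−π)/4`;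
consequently if `X` is Rayleigh with power parameter `σ_I² = σ_s² φ` and `Y` is
Nakagami with shape `Ω` and spread `φ`, then `Var[X] > σ_s² Var[Y]` (variances
written as `E[·²] − E[·]²`). -/
theorem stmt_18
    {Ωs : Type*} [MeasurableSpace Ωs] (P : Measure Ωs) [IsProbabilityMeasure P]
    (Ω φ σs : ℝ) (hΩ : 1 < Ω) (hφ : 0 < φ) (hσs : 0 < σs)
    (X Y : Ωs → ℝ) (hXmeas : Measurable X) (hYmeas : Measurable Y)
    (hX : Measure.map X P =
      volume.withDensity (fun τ => ENNReal.ofReal (rayleighPDF (σs ^ 2 * φ) τ)))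
    (hY : Measure.map Y P =
      volume.withDensity (fun τ => ENNReal.ofReal (nakagamiPDF Ω φ τ))) :
    (1 - (1 / Ω) * (Real.Gamma (Ω + 1 / 2) / Real.Gamma Ω) ^ 2 < (4 - π) / 4) ∧
    (σs ^ 2 * ((∫ ω, (Y ω) ^ 2 ∂P) - (∫ ω, Y ω ∂P) ^ 2) <
      (∫ ω, (X ω) ^ 2 ∂P) - (∫ ω, X ω ∂P) ^ 2) :=
  stmt_18_general P Ω φ σs hΩ hφ hσs X Y hXmeas hYmeas hX hY
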